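/- arXiv:2506.19723 — 4 statements merged into one kernel-verified Lean document; each statement's English description precedes it below -/
import Mathlib

section
/- Let B = [d_1 ... d_n] ∈ ℝ^{n×n} have linearly independent unit columns. Then there exists a unique unit vector u ∈ ℝⁿ and γ > 0 such that u⊤ d_i = γ for all i, and moreover γ = 1/√(e⊤ (B⊤B)^{-1} e). -/
open Matrix

theorem gram_vector_exists_unique (n : ℕ) (hn : 0 < n) (B : Matrix (Fin n) (Fin n) ℝ)
    (hlin : LinearIndependent ℝ (fun i => Bᵀ i))
    (hunit : ∀ i, Bᵀ i ⬝ᵥ Bᵀ i = 1) :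
    ∃ u : Fin n → ℝ, ∃ γ : ℝ,
      (u ⬝ᵥ u = 1 ∧ 0 < γ ∧ (∀ i, u ⬝ᵥ Bᵀ i = γ) ∧
        γ = 1 / Real.sqrt ((fun _ => (1 : ℝ)) ⬝ᵥ ((Bᵀ * B)⁻¹ *ᵥ fun _ => (1 : ℝ)))) ∧
      ∀ u' : Fin n → ℝ, ∀ γ' : ℝ,
        (u' ⬝ᵥ u' = 1 ∧ 0 < γ' ∧ ∀ i, u' ⬝ᵥ Bᵀ i = γ') → u' = u ∧ γ' = γ := by
  have hB : IsUnit B := linearIndependent_cols_iff_isUnit.mp hlin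
  have hBt : IsUnit Bᵀ := (isUnit_transpose B).mpr hB
  have hdet : IsUnit B.det := (isUnit_iff_isUnit_det B).mp hB
  have hdetT : IsUnit Bᵀ.det := (isUnit_iff_isUnit_det Bᵀ).mp hBt
  set e : Fin n → ℝ := fun _ => (1 : ℝ) with he
  set v : Fin n → ℝ := Bᵀ⁻¹ *ᵥ e with hv
  have hBv : Bᵀ *ᵥ v = e := by
    rw [hv, mulVec_mulVec, mul_nonsing_inv _ hdetT, one_mulVec]
  have he0 : e ≠ 0 := by
    intro h
    have := congrFun h ⟨0, hn⟩
    simp [he] at this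
  have hv0 : v ≠ 0 := by
    intro h
    rw [h, mulVec_zero] at hBv
    exact he0 hBv.symm
  set s : ℝ := e ⬝ᵥ ((Bᵀ * B)⁻¹ *ᵥ e) with hs
  have hsv : s = v ⬝ᵥ v := by
    rw [hs, hv, Matrix.mul_inv_rev, ← mulVec_mulVec, dotProduct_mulVec,
      show Bᵀ⁻¹ = (B⁻¹)ᵀ from (transpose_nonsing_inv B).symm, mulVec_transpose]
  have hspos : 0 < s := by
    rw [hsv]
    rcases Function.ne_iff.mp hv0 with ⟨i, hi⟩
    exact Finset.sum_pos' (fun j _ => mul_self_nonneg _)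
      ⟨i, Finset.mem_univ i, mul_self_pos.mpr hi⟩
  set γ : ℝ := 1 / Real.sqrt s with hγ
  have hγpos : 0 < γ := by positivity
  have hγs : γ * γ * s = 1 := by
    rw [hγ]
    have h : Real.sqrt s * Real.sqrt s = s := Real.mul_self_sqrt hspos.le
    have hne : Real.sqrt s ≠ 0 := by positivity
    field_simp
    rw [sq, h]
  -- characterization of the condition
  have hcondv : ∀ (w : Fin n → ℝ) (c : ℝ), (∀ i, w ⬝ᵥ Bᵀ i = c) ↔ w = c • v := by
    intro w c
    constructor
    · intro h
      have h1 : Bᵀ *ᵥ w = c • e := by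
        funext i
        simp only [mulVec, Pi.smul_apply, he, smul_eq_mul, mul_one]
        rw [dotProduct_comm]
        exact h i
      have h2 : Bᵀ⁻¹ *ᵥ (Bᵀ *ᵥ w) = w := by
        rw [mulVec_mulVec, nonsing_inv_mul _ hdetT, one_mulVec]
      rw [h1, mulVec_smul] at h2
      rw [← h2, hv]
    · intro h
      intro i
      have : v ⬝ᵥ Bᵀ i = 1 := by
        rw [dotProduct_comm]
        have := congrFun hBv i
        exact this
      rw [h, smul_dotProduct, this, smul_eq_mul, mul_one]
  set u : Fin n → ℝ := γ • v with hu
  refine ⟨u, γ, ⟨?_, hγpos, (hcondv u γ).mpr rfl, rfl⟩, ?_⟩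
  · rw [hu, smul_dotProduct, dotProduct_smul, ← hsv]
    simpa [smul_eq_mul, mul_assoc] using hγs
  · rintro u' γ' ⟨hu'1, hγ'pos, hcond⟩
    have hu'v : u' = γ' • v := (hcondv u' γ').mp hcond
    have h1 : γ' * γ' * s = 1 := by
      rw [hu'v, smul_dotProduct, dotProduct_smul, ← hsv] at hu'1
      simpa [smul_eq_mul, mul_assoc] using hu'1
    have hγγ : γ' = γ := by nlinarith
    exact ⟨by rw [hu'v, hγγ, hu], hγγ⟩
end

section
/- A finite set S = {d_1,...,d_k} of nonzero vectors in ℝⁿ positively spans ℝⁿ if and only if cm(S) > 0, where cm(S) = min_{‖v‖=1} max_{d ∈ S} (d⊤ v)/‖d‖. -/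
open scoped RealInnerProductSpace

/-- The cosine measure of a nonempty finite set of vectors. -/
noncomputable def cosineMeasure {n : ℕ} (S : Finset (EuclideanSpace ℝ (Fin n)))
    (hS : S.Nonempty) : ℝ :=
  sInf {r : ℝ | ∃ v : EuclideanSpace ℝ (Fin n), ‖v‖ = 1 ∧
    r = S.sup' hS (fun d => ⟪v, d⟫ / ‖d‖)}

section aux
variable {n : ℕ} (S : Finset (EuclideanSpace ℝ (Fin n))) (hS : S.Nonempty)
    (h0 : ∀ d ∈ S, d ≠ 0)

lemma cm_bddBelow (h0 : ∀ d ∈ S, d ≠ 0) :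
    ∀ r ∈ {r : ℝ | ∃ v : EuclideanSpace ℝ (Fin n), ‖v‖ = 1 ∧
      r = S.sup' hS (fun d => ⟪v, d⟫ / ‖d‖)}, -1 ≤ r := by
  rintro r ⟨v, hv, rfl⟩
  obtain ⟨d, hd⟩ := hS
  have hdn : (0:ℝ) < ‖d‖ := norm_pos_iff.2 (h0 d hd)
  have h1 : -(‖v‖ * ‖d‖) ≤ ⟪v, d⟫ := neg_le_of_abs_le (abs_real_inner_le_norm v d)
  have : (-1 : ℝ) ≤ ⟪v, d⟫ / ‖d‖ := by
    rw [le_div_iff₀ hdn]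
    rw [hv] at h1; linarith
  exact this.trans (Finset.le_sup' (fun d => ⟪v, d⟫ / ‖d‖) hd)
end aux

theorem positively_spans_iff_cosine_measure_pos (n : ℕ)
    (S : Finset (EuclideanSpace ℝ (Fin n))) (hS : S.Nonempty)
    (h0 : ∀ d ∈ S, d ≠ 0) :
    (∀ x : EuclideanSpace ℝ (Fin n),
      ∃ c : EuclideanSpace ℝ (Fin n) → ℝ, (∀ d, 0 ≤ c d) ∧ x = ∑ d ∈ S, c d • d) ↔
    0 < cosineMeasure S hS := by
  set f : EuclideanSpace ℝ (Fin n) → ℝ := fun v => S.sup' hS (fun d => ⟪v, d⟫ / ‖d‖) with hf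
  set A : Set ℝ := {r : ℝ | ∃ v : EuclideanSpace ℝ (Fin n), ‖v‖ = 1 ∧ r = f v} with hA
  have hbdd : BddBelow A := ⟨-1, fun r hr => cm_bddBelow S hS h0 r hr⟩
  constructor
  · -- positively spans → 0 < cm
    intro hspan
    -- A is the image of the unit sphere under continuous f
    have hfc : Continuous f := by
      apply Continuous.finset_sup'_apply hS
      intro d _
      exact ((continuous_id.inner continuous_const)).div_const _
    have hAeq : A = f '' Metric.sphere (0:EuclideanSpace ℝ (Fin n)) 1 := by
      ext r
      simp only [hA, Set.mem_setOf_eq, Set.mem_image, mem_sphere_zero_iff_norm]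
      constructor
      · rintro ⟨v, hv, rfl⟩; exact ⟨v, hv, rfl⟩
      · rintro ⟨v, hv, rfl⟩; exact ⟨v, hv, rfl⟩
    obtain ⟨d0, hd0⟩ := id hS
    have hd0n : (0:ℝ) < ‖d0‖ := norm_pos_iff.2 (h0 d0 hd0)
    have hAne : A.Nonempty := by
      refine ⟨f (‖d0‖⁻¹ • d0), ‖d0‖⁻¹ • d0, ?_, rfl⟩
      rw [norm_smul, norm_inv, norm_norm, inv_mul_cancel₀ hd0n.ne']
    have hAcomp : IsCompact A := by
      rw [hAeq]; exact (isCompact_sphere 0 1).image hfc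
    have hmem : sInf A ∈ A := hAcomp.sInf_mem hAne
    obtain ⟨v, hv, hveq⟩ := hmem
    obtain ⟨c, hc, hxc⟩ := hspan v
    have h1 : (1:ℝ) = ∑ d ∈ S, c d * ⟪v, d⟫ := by
      have hvv : ⟪v, v⟫ = 1 := by rw [real_inner_self_eq_norm_sq, hv]; norm_num
      rw [← hvv]
      nth_rewrite 2 [hxc]
      rw [inner_sum]
      exact Finset.sum_congr rfl fun d _ => real_inner_smul_right v d (c d)
    have hex : ∃ d ∈ S, 0 < c d * ⟪v, d⟫ := by
      by_contra h
      push_neg at h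
      have : ∑ d ∈ S, c d * ⟪v, d⟫ ≤ 0 := Finset.sum_nonpos h
      linarith
    obtain ⟨d, hd, hcd⟩ := hex
    have hip : 0 < ⟪v, d⟫ := by
      rcases lt_or_ge 0 ⟪v, d⟫ with h | h
      · exact h
      · nlinarith [hc d]
    have hdn : (0:ℝ) < ‖d‖ := norm_pos_iff.2 (h0 d hd)
    have : 0 < ⟪v, d⟫ / ‖d‖ := div_pos hip hdn
    calc (0:ℝ) < ⟪v, d⟫ / ‖d‖ := this
      _ ≤ f v := Finset.le_sup' (fun d => ⟪v, d⟫ / ‖d‖) hd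
      _ = cosineMeasure S hS := hveq.symm
  · -- 0 < cm → positively spans
    intro hcm x
    classical
    set cm := cosineMeasure S hS with hcmdef
    set m : ℝ := S.inf' hS fun d => ‖d‖ with hm
    have hmpos : 0 < m := by
      rw [hm]
      exact (Finset.lt_inf'_iff hS).2 fun d hd => norm_pos_iff.2 (h0 d hd)
    have hρ : 0 < cm * m := mul_pos hcm hmpos
    -- key claim: small vectors are in the convex hull of S
    have key : ∀ y : EuclideanSpace ℝ (Fin n), ‖y‖ ≤ cm * m → y ∈ convexHull ℝ (↑S : Set (EuclideanSpace ℝ (Fin n))) := by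
      intro y hy
      by_contra hyc
      obtain ⟨φ, u, h1, h2⟩ := geometric_hahn_banach_closed_point
        (convex_convexHull ℝ _) ((S.finite_toSet.isCompact_convexHull (𝕜 := ℝ)).isClosed) hyc
      set v : EuclideanSpace ℝ (Fin n) := (InnerProductSpace.toDual ℝ (EuclideanSpace ℝ (Fin n))).symm φ with hvdef
      have hφ : ∀ z : EuclideanSpace ℝ (Fin n), ⟪v, z⟫ = φ z := fun z => InnerProductSpace.toDual_symm_apply
      obtain ⟨d0, hd0⟩ := id hS
      have hd0C : (d0 : EuclideanSpace ℝ (Fin n)) ∈ convexHull ℝ (↑S : Set (EuclideanSpace ℝ (Fin n))) :=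
        subset_convexHull ℝ _ (by exact_mod_cast hd0)
      have hvne : v ≠ 0 := by
        intro h
        have e1 : φ d0 < φ y := (h1 d0 hd0C).trans h2
        have e2 : φ d0 = 0 := by rw [← hφ, h, inner_zero_left]
        have e3 : φ y = 0 := by rw [← hφ, h, inner_zero_left]
        rw [e2, e3] at e1; exact lt_irrefl 0 e1
      have hvn : (0:ℝ) < ‖v‖ := norm_pos_iff.2 hvne
      set w : EuclideanSpace ℝ (Fin n) := ‖v‖⁻¹ • v with hwdef
      have hwn : ‖w‖ = 1 := by
        rw [hwdef, norm_smul, norm_inv, norm_norm, inv_mul_cancel₀ hvn.ne']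
      have hcmle : cm ≤ f w := csInf_le hbdd ⟨w, hwn, rfl⟩
      obtain ⟨d, hd, hdeq⟩ := Finset.exists_mem_eq_sup' hS (fun d => ⟪w, d⟫ / ‖d‖)
      have hdn : (0:ℝ) < ‖d‖ := norm_pos_iff.2 (h0 d hd)
      have hmd : m ≤ ‖d‖ := Finset.inf'_le _ hd
      have hcd : cm * ‖d‖ ≤ ⟪w, d⟫ := by
        have : cm ≤ ⟪w, d⟫ / ‖d‖ := by rw [← hdeq]; exact hcmle
        calc cm * ‖d‖ ≤ (⟪w, d⟫ / ‖d‖) * ‖d‖ := by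
              apply mul_le_mul_of_nonneg_right this hdn.le
          _ = ⟪w, d⟫ := div_mul_cancel₀ _ hdn.ne'
      have hwd : ⟪w, d⟫ = ⟪v, d⟫ / ‖v‖ := by
        rw [hwdef, real_inner_smul_left]; ring
      have hdC : (d : EuclideanSpace ℝ (Fin n)) ∈ convexHull ℝ (↑S : Set (EuclideanSpace ℝ (Fin n))) :=
        subset_convexHull ℝ _ (by exact_mod_cast hd)
      have hvd : ⟪v, d⟫ < ⟪v, y⟫ := by
        rw [hφ, hφ]; exact (h1 d hdC).trans h2
      have hvy : ⟪v, y⟫ ≤ ‖v‖ * ‖y‖ := real_inner_le_norm v y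
      -- cm * m ≤ cm * ‖d‖ ≤ ⟪w,d⟫ = ⟪v,d⟫/‖v‖ < ⟪v,y⟫/‖v‖ ≤ ‖y‖ ≤ cm * m
      have c1 : cm * m ≤ cm * ‖d‖ := mul_le_mul_of_nonneg_left hmd hcm.le
      have c3 : ⟪v, y⟫ / ‖v‖ ≤ ‖y‖ := by
        rw [div_le_iff₀ hvn]
        calc ⟪v, y⟫ ≤ ‖v‖ * ‖y‖ := hvy
          _ = ‖y‖ * ‖v‖ := by ring
      have c2 : ⟪v, d⟫ / ‖v‖ < ⟪v, y⟫ / ‖v‖ :=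
        div_lt_div_of_pos_right hvd hvn
      rw [hwd] at hcd
      linarith
    -- now express x
    by_cases hx : x = 0
    · exact ⟨fun _ => 0, fun _ => le_refl 0, by simp [hx]⟩
    · have hxn : (0:ℝ) < ‖x‖ := norm_pos_iff.2 hx
      set y : EuclideanSpace ℝ (Fin n) := ((cm * m) / ‖x‖) • x with hydef
      have hyn : ‖y‖ = cm * m := by
        rw [hydef, norm_smul, Real.norm_eq_abs, abs_of_pos (div_pos hρ hxn),
          div_mul_cancel₀ _ hxn.ne']
      have hyC := key y (le_of_eq hyn)
      rw [Finset.mem_convexHull'] at hyC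
      obtain ⟨wt, hwt0, hwt1, hwty⟩ := hyC
      refine ⟨fun d => if d ∈ S then (‖x‖ / (cm * m)) * wt d else 0, ?_, ?_⟩
      · intro d
        by_cases h : d ∈ S
        · simp only [h, if_true]
          exact mul_nonneg (div_pos hxn hρ).le (hwt0 d h)
        · simp [h]
      · have hsum : ∑ d ∈ S, (if d ∈ S then (‖x‖ / (cm * m)) * wt d else 0) • d
            = (‖x‖ / (cm * m)) • y := by
          rw [← hwty, Finset.smul_sum]
          apply Finset.sum_congr rfl
          intro d hd
          rw [if_pos hd, smul_smul]
        rw [hsum, hydef, smul_smul]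
        have hone : ‖x‖ / (cm * m) * (cm * m / ‖x‖) = 1 := by
          field_simp
        rw [hone, one_smul]
end

section
/- Let n ≥ 2 and 0 ≤ δ < 1/n, and set β = (nδ² − 2δ − 1)/(nδ² − 2δ + n). Then β ≤ −1/n and β > −1/(n−1); moreover β is strictly decreasing as a function of δ on [0, 1/n). -/
/-!
The denominator `D t = n t² - 2t + n` is a quadratic with vertex at `t = 1/n`, hence strictly
decreasing on `(-∞, 1/n]`, where it stays above `D (1/n) = n - 1/n > 0`. Since the numerator is
`D t - (n + 1)`, we get `β = 1 - (n + 1) / D t`, which is therefore strictly decreasing on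
`[0, 1/n]`. Both bounds are the values at the endpoints: `β(0) = -1/n` and `β(1/n) = -1/(n-1)`.
-/

open Set

lemma strictAntiOn_quadratic {a : ℝ} (ha : 0 < a) (c : ℝ) :
    StrictAntiOn (fun t : ℝ => a * t ^ 2 - 2 * t + c) (Iic (1 / a)) := by
  intro u hu v hv huv
  have hav : a * v ≤ 1 := (le_div_iff₀' ha).mp hv
  have hsum : a * (u + v) < 2 := by nlinarith
  -- `D u - D v = (u - v) (a (u + v) - 2)`
  nlinarith [mul_pos (sub_pos.mpr huv) (sub_pos.mpr hsum)]

lemma quadratic_pos_of_le {a c : ℝ} (ha : 0 < a) (hc : 1 / a < c) {t : ℝ} (ht : t ≤ 1 / a) :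
    0 < a * t ^ 2 - 2 * t + c := by
  have hvertex : a * (1 / a) ^ 2 - 2 * (1 / a) + c = c - 1 / a := by
    field_simp
    ring
  have := (strictAntiOn_quadratic ha c).antitoneOn ht self_mem_Iic ht
  linarith

lemma sub_one_div_add_eq_one_sub (q c : ℝ) (h : q + c ≠ 0) :
    (q - 1) / (q + c) = 1 - (c + 1) / (q + c) := by
  field_simp
  ring

lemma strictAntiOn_quadratic_ratio {a c : ℝ} (ha : 0 < a) (hc : 1 / a < c) :
    StrictAntiOn (fun t : ℝ => (a * t ^ 2 - 2 * t - 1) / (a * t ^ 2 - 2 * t + c)) (Iic (1 / a)) := by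
  intro u hu v hv huv
  have hDu := quadratic_pos_of_le ha hc hu
  have hDv := quadratic_pos_of_le ha hc hv
  have hDuv := strictAntiOn_quadratic ha c hu hv huv
  have hc1 : 0 < c + 1 := by linarith [one_div_pos.mpr ha]
  simp only at hDuv ⊢
  rw [sub_one_div_add_eq_one_sub _ _ hDu.ne', sub_one_div_add_eq_one_sub _ _ hDv.ne']
  exact sub_lt_sub_left (div_lt_div_of_pos_left hc1 hDv hDuv) 1

theorem beta_bounds_and_decreasing (n : ℕ) (hn : 2 ≤ n) (δ : ℝ)
    (hδ0 : 0 ≤ δ) (hδ1 : δ < 1 / n) :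
    ((n : ℝ) * δ ^ 2 - 2 * δ - 1) / ((n : ℝ) * δ ^ 2 - 2 * δ + n) ≤ -(1 / n) ∧
    -(1 / ((n : ℝ) - 1)) <
      ((n : ℝ) * δ ^ 2 - 2 * δ - 1) / ((n : ℝ) * δ ^ 2 - 2 * δ + n) ∧
    StrictAntiOn (fun t : ℝ => ((n : ℝ) * t ^ 2 - 2 * t - 1) / ((n : ℝ) * t ^ 2 - 2 * t + n))
      (Set.Ico 0 (1 / n)) := by
  have hn2 : (2 : ℝ) ≤ n := by exact_mod_cast hn
  have hnpos : (0 : ℝ) < n := by linarith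
  have hc : 1 / (n : ℝ) < n := by
    rw [div_lt_iff₀ hnpos]
    nlinarith
  have hβ := strictAntiOn_quadratic_ratio hnpos hc
  have hδ : δ ∈ Iic (1 / (n : ℝ)) := hδ1.le
  refine ⟨?_, ?_, hβ.mono fun t ht => ht.2.le⟩
  · have hβ_le := hβ.antitoneOn (one_div_nonneg.mpr hnpos.le) hδ hδ0
    simpa [neg_div] using hβ_le
  · have hD := quadratic_pos_of_le hnpos hc (le_refl (1 / (n : ℝ)))
    have hβ_right : -(1 / ((n : ℝ) - 1)) =
        ((n : ℝ) * (1 / n) ^ 2 - 2 * (1 / n) - 1) / ((n : ℝ) * (1 / n) ^ 2 - 2 * (1 / n) + n) := by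
      have hn1 : (n : ℝ) - 1 ≠ 0 := by linarith
      rw [eq_div_iff hD.ne']
      field_simp
      ring
    rw [hβ_right]
    exact hβ hδ self_mem_Iic hδ1
end

section
/- Let {v_1, ..., v_k} be a basis of ℝⁿ (so k = n) and let J_1, ..., J_ℓ be subsets of {1,...,k} whose union is {1,...,k}. Then for any choice of λ_{i,j} > 0 (i = 1,...,ℓ, j ∈ J_i), the set {v_1,...,v_k} ∪ {−∑_{j∈J_1} λ_{1,j} v_j, ..., −∑_{j∈J_ℓ} λ_{ℓ,j} v_j} positively spans ℝⁿ. -/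
theorem basis_augmentation_positively_spans (n ℓ : ℕ) (v : Fin n → (Fin n → ℝ))
    (hli : LinearIndependent ℝ v)
    (hsp : Submodule.span ℝ (Set.range v) = ⊤)
    (J : Fin ℓ → Finset (Fin n))
    (hJ : (⋃ i, (J i : Set (Fin n))) = Set.univ)
    (lam : Fin ℓ → Fin n → ℝ) (hlam : ∀ i, ∀ j ∈ J i, 0 < lam i j) :
    ∀ x : Fin n → ℝ, ∃ (c : Fin n → ℝ) (b : Fin ℓ → ℝ),
      (∀ j, 0 ≤ c j) ∧ (∀ i, 0 ≤ b i) ∧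
      x = ∑ j, c j • v j + ∑ i, b i • (-(∑ j ∈ J i, lam i j • v j)) := by
  intro x
  set B := Module.Basis.mk hli (by rw [hsp]) with hB
  set a : Fin n → ℝ := fun j => B.repr x j with ha
  set s : Fin n → ℝ := fun j => ∑ i, if j ∈ J i then lam i j else 0 with hs
  have hs_pos : ∀ j, 0 < s j := by
    intro j
    obtain ⟨i, hi⟩ : ∃ i, j ∈ J i := by
      have := Set.mem_univ j
      rw [← hJ] at this
      simpa using this
    refine Finset.sum_pos' (fun i _ => ?_) ⟨i, Finset.mem_univ i, ?_⟩
    · split <;> [exact (hlam _ _ (by assumption)).le; rfl]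
    · simp [hi, hlam i j hi]
  set M : ℝ := ∑ j, |a j| / s j with hM
  have hM_nonneg : 0 ≤ M :=
    Finset.sum_nonneg fun j _ => div_nonneg (abs_nonneg _) (hs_pos j).le
  have hMs : ∀ j, |a j| ≤ M * s j := by
    intro j
    have h1 : |a j| / s j ≤ M :=
      Finset.single_le_sum (f := fun k => |a k| / s k)
        (fun k _ => div_nonneg (abs_nonneg _) (hs_pos k).le) (Finset.mem_univ j)
    exact (div_le_iff₀ (hs_pos j)).mp h1
  refine ⟨fun j => a j + M * s j, fun _ => M, ?_, fun _ => hM_nonneg, ?_⟩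
  · intro j
    have h2 := hMs j
    have h3 := neg_abs_le (a j)
    show 0 ≤ a j + M * s j
    linarith
  · have key : ∑ i, (∑ j ∈ J i, lam i j • v j) = ∑ j, s j • v j := by
      have h1 : ∀ i, ∑ j ∈ J i, lam i j • v j
          = ∑ j, (if j ∈ J i then lam i j else 0) • v j := by
        intro i
        simp only [ite_smul, zero_smul, Finset.sum_ite_mem, Finset.univ_inter]
      simp_rw [h1]
      rw [Finset.sum_comm]
      refine Finset.sum_congr rfl fun j _ => ?_
      rw [← Finset.sum_smul]
    have hx : ∑ j, a j • v j = x := by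
      have := B.sum_repr x
      simpa [hB, Module.Basis.coe_mk, ha] using this
    calc x = ∑ j, a j • v j + (∑ j, (M * s j) • v j - M • ∑ j, s j • v j) := by
            rw [Finset.smul_sum]
            simp_rw [smul_smul]
            rw [sub_self, add_zero, hx]
      _ = ∑ j, (a j + M * s j) • v j + ∑ i, M • (-(∑ j ∈ J i, lam i j • v j)) := by
            rw [← key]
            simp only [add_smul, Finset.sum_add_distrib, smul_neg,
              Finset.sum_neg_distrib, ← Finset.smul_sum]
            abel
end
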